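/- arXiv:1809.01801 — 5 statements merged into one kernel-verified Lean document; each statement's English description precedes it below -/
import Mathlib

section
/- Let φ : A → B be a morphism of connected finite-type graded k-algebras such that φ^1 : A^1 → B^1 is injective. Then φ^1(R^1_k(A)) ⊆ R^1_k(B) for all k ≥ 0. -/
open Module LinearMap

/-- The differential `δ_a^i : A^i → A^{i+1}`, left multiplication by `a ∈ A^1`. -/
def gdelta {K R : Type*} [Field K] [Ring R] [Algebra K R]
    (𝒜 : ℕ → Submodule K R) [GradedRing 𝒜] (a : 𝒜 1) (i : ℕ) :
    𝒜 i →ₗ[K] 𝒜 (i + 1) where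
  toFun u := ⟨(a : R) * (u : R), by
    simpa [add_comm] using SetLike.mul_mem_graded a.2 u.2⟩
  map_add' u v := by ext; simp [mul_add]
  map_smul' c u := by ext; simp [mul_smul_comm]

/-- `dim H^i(A, δ_a)`: the dimension of the degree-`i` cohomology of `(A, δ_a)`. -/
noncomputable def hdim {K R : Type*} [Field K] [Ring R] [Algebra K R]
    (𝒜 : ℕ → Submodule K R) [GradedRing 𝒜] (a : 𝒜 1) : ℕ → ℕ
  | 0 => finrank K (LinearMap.ker (gdelta 𝒜 a 0))
  | (i + 1) => finrank K (LinearMap.ker (gdelta 𝒜 a (i + 1)))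
      - finrank K (LinearMap.range (gdelta 𝒜 a i))

/-- The resonance variety `R^i_k(A) ⊆ A^1`. -/
noncomputable def resSet {K R : Type*} [Field K] [Ring R] [Algebra K R]
    (𝒜 : ℕ → Submodule K R) [GradedRing 𝒜] (i k : ℕ) : Set (𝒜 1) :=
  {a | k ≤ hdim 𝒜 a i}

/-- If `φ : A → B` is a morphism of connected finite-type graded algebras with
`φ^1` injective, then `φ^1(R^1_k(A)) ⊆ R^1_k(B)` for all `k ≥ 0`. -/
theorem resonance_functoriality_degree_one
    {K R R' : Type*} [Field K] [Ring R] [Algebra K R] [Ring R'] [Algebra K R']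
    (𝒜 : ℕ → Submodule K R) [GradedRing 𝒜]
    (ℬ : ℕ → Submodule K R') [GradedRing ℬ]
    (hAcomm : ∀ (i j : ℕ) (x y : R), x ∈ 𝒜 i → y ∈ 𝒜 j →
      x * y = (-1 : R) ^ (i * j) * (y * x))
    (hBcomm : ∀ (i j : ℕ) (x y : R'), x ∈ ℬ i → y ∈ ℬ j →
      x * y = (-1 : R') ^ (i * j) * (y * x))
    (hAconn : ∀ x ∈ 𝒜 0, ∃ c : K, x = algebraMap K R c)
    (hBconn : ∀ x ∈ ℬ 0, ∃ c : K, x = algebraMap K R' c)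
    (hAfin : ∀ i, FiniteDimensional K (𝒜 i))
    (hBfin : ∀ i, FiniteDimensional K (ℬ i))
    (hchar : (2 : K) ≠ 0)
    (φ : R →ₐ[K] R') (hφ : ∀ i, ∀ x ∈ 𝒜 i, φ x ∈ ℬ i)
    (hinj : ∀ x ∈ 𝒜 1, φ x = 0 → x = 0)
    (k : ℕ) (a : 𝒜 1) (ha : a ∈ resSet 𝒜 1 k)
    (aB : ℬ 1) (haB : (aB : R') = φ (a : R)) :
    aB ∈ resSet ℬ 1 k := by

  haveI := hAfin 1; haveI := hBfin 1; haveI := hAfin 2; haveI := hBfin 2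
  -- the induced map on degree 1
  have hφ1 : ∀ x : 𝒜 1, φ (x : R) ∈ ℬ 1 := fun x => hφ 1 x x.2
  set f : 𝒜 1 →ₗ[K] ℬ 1 :=
    { toFun := fun x => ⟨φ (x : R), hφ1 x⟩
      map_add' := by intro x y; ext; simp
      map_smul' := by intro c x; ext; simp } with hf
  have hfinj : Function.Injective f := by
    intro x y h
    have h' : φ (x : R) = φ (y : R) := congrArg Subtype.val h
    have hsub : φ ((x : R) - (y : R)) = 0 := by
      rw [map_sub, h', sub_self]
    have := hinj _ (Submodule.sub_mem _ x.2 y.2) hsub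
    exact Subtype.ext (sub_eq_zero.mp this)
  -- f maps ker δ_a into ker δ_aB
  have hmap : ∀ x ∈ LinearMap.ker (gdelta 𝒜 a 1), f x ∈ LinearMap.ker (gdelta ℬ aB 1) := by
    intro x hx
    have hx' : (a : R) * (x : R) = 0 := congrArg Subtype.val (LinearMap.mem_ker.mp hx)
    refine LinearMap.mem_ker.mpr (Subtype.ext ?_)
    show (aB : R') * φ (x : R) = 0
    rw [haB, ← map_mul, hx', map_zero]
  have hker : finrank K (LinearMap.ker (gdelta 𝒜 a 1)) ≤
      finrank K (LinearMap.ker (gdelta ℬ aB 1)) := by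
    have hr : Function.Injective (f.restrict hmap) := by
      intro u v h
      have : φ ((u : 𝒜 1) : R) = φ ((v : 𝒜 1) : R) := by
        have := congrArg (Subtype.val ∘ Subtype.val) h
        simpa [LinearMap.restrict_apply, hf] using this
      exact Subtype.ext (hfinj (Subtype.ext this))
    exact LinearMap.finrank_le_finrank_of_injective hr
  -- range comparison
  have hrange : finrank K (LinearMap.range (gdelta ℬ aB 0)) ≤
      finrank K (LinearMap.range (gdelta 𝒜 a 0)) := by
    by_cases hz : (aB : R') = 0
    · have : LinearMap.range (gdelta ℬ aB 0) = ⊥ := by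
        rw [LinearMap.range_eq_bot]
        ext x
        simp [gdelta, hz]
      rw [this]
      simp
    · -- aB ≠ 0, hence a ≠ 0
      have haz : a ≠ 0 := by
        intro h0
        apply hz
        rw [haB, h0]
        simp
      have ha0 : (a : 𝒜 (0 + 1)) ∈ LinearMap.range (gdelta 𝒜 a 0) := by
        exact ⟨⟨1, SetLike.one_mem_graded _⟩, Subtype.ext (mul_one (a : R))⟩
      have h1A : 1 ≤ finrank K (LinearMap.range (gdelta 𝒜 a 0)) := by
        have hsp : Submodule.span K {a} ≤ LinearMap.range (gdelta 𝒜 a 0) := by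
          rw [Submodule.span_singleton_le_iff_mem]; exact ha0
        have := Submodule.finrank_mono hsp
        rwa [finrank_span_singleton haz] at this
      have h1B : finrank K (LinearMap.range (gdelta ℬ aB 0)) ≤ 1 := by
        have hsp : LinearMap.range (gdelta ℬ aB 0) ≤ Submodule.span K {aB} := by
          rintro y ⟨x, rfl⟩
          obtain ⟨c, hc⟩ := hBconn (x : R') x.2
          have : gdelta ℬ aB 0 x = c • aB := by
            refine Subtype.ext ?_
            show (aB : R') * (x : R') = c • (aB : R')
            rw [hc, Algebra.smul_def]; exact (Algebra.commutes c _).symm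
          rw [this]
          exact Submodule.smul_mem _ _ (Submodule.mem_span_singleton_self aB)
        calc finrank K (LinearMap.range (gdelta ℬ aB 0))
            ≤ finrank K (Submodule.span K {aB}) := Submodule.finrank_mono hsp
          _ = 1 := by
              refine finrank_span_singleton ?_
              intro h; exact hz (congrArg Subtype.val h)
      omega
  have ha' : k ≤ hdim 𝒜 a 1 := ha
  have hA : hdim 𝒜 a 1 = finrank K (LinearMap.ker (gdelta 𝒜 a 1))
      - finrank K (LinearMap.range (gdelta 𝒜 a 0)) := rfl
  have hB : hdim ℬ aB 1 = finrank K (LinearMap.ker (gdelta ℬ aB 1))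
      - finrank K (LinearMap.range (gdelta ℬ aB 0)) := rfl
  show k ≤ hdim ℬ aB 1
  rw [hB]
  rw [hA] at ha'
  omega
end

section
/- Let A be a PD_m algebra over a field k of characteristic ≠ 2. Then R^i_k(A) = R^{m-i}_k(A) for all i and k. -/
open Module LinearMap

section Aux

variable {K R : Type*} [Field K] [Ring R] [Algebra K R]
    (𝒜 : ℕ → Submodule K R) [GradedRing 𝒜]

/-- The Poincaré duality pairing as a linear map into the dual. -/
noncomputable def pairB (ε : R →ₗ[K] K) (i j : ℕ) :
    (𝒜 i) →ₗ[K] Module.Dual K (𝒜 j) :=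
  LinearMap.mk₂ K (fun (x : 𝒜 i) (y : 𝒜 j) => ε ((x : R) * (y : R)))
    (fun x x' y => by simp [add_mul])
    (fun c x y => by simp [smul_mul_assoc])
    (fun x y y' => by simp [mul_add])
    (fun c x y => by simp [mul_smul_comm])

@[simp] lemma pairB_apply (ε : R →ₗ[K] K) (i j : ℕ) (x : 𝒜 i) (y : 𝒜 j) :
    pairB 𝒜 ε i j x y = ε ((x : R) * (y : R)) := rfl

lemma pairB_inj {m : ℕ} (ε : R →ₗ[K] K)
    (hPD : ∀ (i : ℕ) (x : R), x ∈ 𝒜 i →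
      (∀ (j : ℕ) (y : R), y ∈ 𝒜 j → i + j = m → ε (x * y) = 0) → x = 0)
    {i j : ℕ} (hij : i + j = m) : Function.Injective (pairB 𝒜 ε i j) := by
  rw [← LinearMap.ker_eq_bot, eq_bot_iff]
  intro x hx
  have hx0 : (x : R) = 0 := by
    refine hPD i x x.2 (fun j' y hy hsum => ?_)
    have : j' = j := by omega
    subst this
    have := LinearMap.congr_fun (LinearMap.mem_ker.mp hx) ⟨y, hy⟩
    simpa using this
  simpa [Submodule.mem_bot] using Subtype.ext hx0

lemma pairB_bij {m : ℕ} (ε : R →ₗ[K] K)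
    (hfin : ∀ i, FiniteDimensional K (𝒜 i))
    (hPD : ∀ (i : ℕ) (x : R), x ∈ 𝒜 i →
      (∀ (j : ℕ) (y : R), y ∈ 𝒜 j → i + j = m → ε (x * y) = 0) → x = 0)
    {i j : ℕ} (hij : i + j = m) : Function.Bijective (pairB 𝒜 ε i j) := by
  haveI := hfin i; haveI := hfin j
  have h1 := pairB_inj 𝒜 ε hPD hij
  have h2 := pairB_inj 𝒜 ε hPD (show j + i = m by omega)
  have d1 : finrank K (𝒜 i) ≤ finrank K (𝒜 j) := by
    calc finrank K (𝒜 i) ≤ finrank K (Module.Dual K (𝒜 j)) :=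
          LinearMap.finrank_le_finrank_of_injective h1
      _ = finrank K (𝒜 j) := Subspace.dual_finrank_eq
  have d2 : finrank K (𝒜 j) ≤ finrank K (𝒜 i) := by
    calc finrank K (𝒜 j) ≤ finrank K (Module.Dual K (𝒜 i)) :=
          LinearMap.finrank_le_finrank_of_injective h2
      _ = finrank K (𝒜 i) := Subspace.dual_finrank_eq
  have hd : finrank K (𝒜 i) = finrank K (Module.Dual K (𝒜 j)) := by
    rw [Subspace.dual_finrank_eq]; omega
  exact ⟨h1, (LinearMap.injective_iff_surjective_of_finrank_eq_finrank hd).mp h1⟩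

end Aux


section Aux2

variable {K R : Type*} [Field K] [Ring R] [Algebra K R]
    (𝒜 : ℕ → Submodule K R) [GradedRing 𝒜]

lemma dim_eq_of_pd {m : ℕ} (ε : R →ₗ[K] K)
    (hfin : ∀ i, FiniteDimensional K (𝒜 i))
    (hPD : ∀ (i : ℕ) (x : R), x ∈ 𝒜 i →
      (∀ (j : ℕ) (y : R), y ∈ 𝒜 j → i + j = m → ε (x * y) = 0) → x = 0)
    {i j : ℕ} (hij : i + j = m) : finrank K (𝒜 i) = finrank K (𝒜 j) := by
  haveI := hfin i; haveI := hfin j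
  have d1 : finrank K (𝒜 i) ≤ finrank K (𝒜 j) := by
    calc finrank K (𝒜 i) ≤ finrank K (Module.Dual K (𝒜 j)) :=
          LinearMap.finrank_le_finrank_of_injective (pairB_inj 𝒜 ε hPD hij)
      _ = finrank K (𝒜 j) := Subspace.dual_finrank_eq
  have d2 : finrank K (𝒜 j) ≤ finrank K (𝒜 i) := by
    calc finrank K (𝒜 j) ≤ finrank K (Module.Dual K (𝒜 i)) :=
          LinearMap.finrank_le_finrank_of_injective
            (pairB_inj 𝒜 ε hPD (show j + i = m by omega))
      _ = finrank K (𝒜 i) := Subspace.dual_finrank_eq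
  omega

/-- The key adjointness identity: `B_{i+1,p} ∘ δ_i = (-1)^i • (δ_p)^* ∘ B_{i,p+1}`. -/
lemma pairB_comp_gdelta (ε : R →ₗ[K] K) (a : 𝒜 1)
    (hcomm : ∀ (i j : ℕ) (x y : R), x ∈ 𝒜 i → y ∈ 𝒜 j →
      x * y = (-1 : R) ^ (i * j) * (y * x)) (i p : ℕ) :
    (pairB 𝒜 ε (i + 1) p).comp (gdelta 𝒜 a i)
      = ((-1 : K) ^ i) • ((gdelta 𝒜 a p).dualMap.comp (pairB 𝒜 ε i (p + 1))) := by
  ext x y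
  have hax : (a : R) * (x : R) = (-1 : R) ^ i * ((x : R) * (a : R)) := by
    simpa using hcomm 1 i a x a.2 x.2
  have hR : ((-1 : R) ^ i) = algebraMap K R ((-1 : K) ^ i) := by
    simp
  have : ((a : R) * (x : R)) * (y : R)
      = ((-1 : K) ^ i) • ((x : R) * ((a : R) * (y : R))) := by
    rw [hax, hR, mul_assoc, mul_assoc, ← Algebra.smul_def]
  simp only [LinearMap.comp_apply, LinearMap.smul_apply, LinearMap.dualMap_apply,
    pairB_apply, gdelta, LinearMap.coe_mk, AddHom.coe_mk, this, map_smul, smul_eq_mul]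

lemma rank_gdelta_eq {m : ℕ} (ε : R →ₗ[K] K) (a : 𝒜 1)
    (hcomm : ∀ (i j : ℕ) (x y : R), x ∈ 𝒜 i → y ∈ 𝒜 j →
      x * y = (-1 : R) ^ (i * j) * (y * x))
    (hfin : ∀ i, FiniteDimensional K (𝒜 i))
    (hPD : ∀ (i : ℕ) (x : R), x ∈ 𝒜 i →
      (∀ (j : ℕ) (y : R), y ∈ 𝒜 j → i + j = m → ε (x * y) = 0) → x = 0)
    {i p : ℕ} (h : i + p + 1 = m) :
    finrank K (LinearMap.range (gdelta 𝒜 a i))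
      = finrank K (LinearMap.range (gdelta 𝒜 a p)) := by
  haveI := hfin i; haveI := hfin p; haveI := hfin (i + 1); haveI := hfin (p + 1)
  have hB2 : Function.Injective (pairB 𝒜 ε (i + 1) p) :=
    pairB_inj 𝒜 ε hPD (by omega)
  have hB1 : Function.Surjective (pairB 𝒜 ε i (p + 1)) :=
    (pairB_bij 𝒜 ε hfin hPD (by omega)).2
  have step1 : finrank K (LinearMap.range (gdelta 𝒜 a i))
      = finrank K (LinearMap.range ((pairB 𝒜 ε (i + 1) p).comp (gdelta 𝒜 a i))) := by
    rw [LinearMap.range_comp]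
    exact (Submodule.equivMapOfInjective _ hB2 _).finrank_eq
  rw [step1, pairB_comp_gdelta 𝒜 ε a hcomm i p,
    LinearMap.range_smul _ _ (pow_ne_zero _ (neg_ne_zero.mpr one_ne_zero)),
    LinearMap.range_comp_of_range_eq_top _ (LinearMap.range_eq_top.mpr hB1),
    LinearMap.finrank_range_dualMap_eq_finrank_range]

lemma gr_dim_zero {m : ℕ} (ε : R →ₗ[K] K)
    (hPD : ∀ (i : ℕ) (x : R), x ∈ 𝒜 i →
      (∀ (j : ℕ) (y : R), y ∈ 𝒜 j → i + j = m → ε (x * y) = 0) → x = 0)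
    {j : ℕ} (h : m < j) : finrank K (𝒜 j) = 0 := by
  have : 𝒜 j = ⊥ := by
    rw [eq_bot_iff]
    intro x hx
    have : x = 0 := hPD j x hx (fun j' y _ hsum => absurd hsum (by omega))
    simp [this]
  rw [this]
  exact finrank_bot K R

lemma range_gdelta_le_ker (a : 𝒜 1)
    (hcomm : ∀ (i j : ℕ) (x y : R), x ∈ 𝒜 i → y ∈ 𝒜 j →
      x * y = (-1 : R) ^ (i * j) * (y * x))
    (hchar : (2 : K) ≠ 0) (j : ℕ) :
    LinearMap.range (gdelta 𝒜 a j) ≤ LinearMap.ker (gdelta 𝒜 a (j + 1)) := by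
  rintro _ ⟨u, rfl⟩
  rw [LinearMap.mem_ker]
  apply Subtype.ext
  show (a : R) * ((a : R) * (u : R)) = (0 : R)
  have haa : (a : R) * (a : R) = -((a : R) * (a : R)) := by
    have := hcomm 1 1 a a a.2 a.2
    simpa using this
  set z : R := (a : R) * ((a : R) * (u : R)) with hz
  have hzz : z + z = 0 := by
    rw [hz, ← mul_assoc]
    nth_rewrite 1 [haa]
    rw [neg_mul]
    exact neg_add_cancel _
  have h2 : (2 : K) • z = 0 := by
    rw [two_smul]; exact hzz
  have := congrArg (fun w => (2 : K)⁻¹ • w) h2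
  simpa [smul_smul, inv_mul_cancel₀ hchar] using this

end Aux2

/-- For a `PD_m` algebra `A`, the resonance varieties satisfy
`R^i_k(A) = R^{m-i}_k(A)` for all `i ≤ m` and all `k`. -/
theorem pd_resonance_duality
    {K R : Type*} [Field K] [Ring R] [Algebra K R]
    (𝒜 : ℕ → Submodule K R) [GradedRing 𝒜]
    (hcomm : ∀ (i j : ℕ) (x y : R), x ∈ 𝒜 i → y ∈ 𝒜 j →
      x * y = (-1 : R) ^ (i * j) * (y * x))
    (hconn : ∀ x ∈ 𝒜 0, ∃ c : K, x = algebraMap K R c)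
    (hfin : ∀ i, FiniteDimensional K (𝒜 i))
    (hchar : (2 : K) ≠ 0)
    (m : ℕ) (ε : R →ₗ[K] K)
    (hPD : ∀ (i : ℕ) (x : R), x ∈ 𝒜 i →
      (∀ (j : ℕ) (y : R), y ∈ 𝒜 j → i + j = m → ε (x * y) = 0) → x = 0) :
    ∀ i ≤ m, ∀ k : ℕ, resSet 𝒜 i k = resSet 𝒜 (m - i) k := by
  intro i hi k
  ext a
  suffices main : hdim 𝒜 a i = hdim 𝒜 a (m - i) by
    simp [resSet, main]
  -- notation
  have hrn : ∀ j, finrank K (LinearMap.range (gdelta 𝒜 a j))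
      + finrank K (LinearMap.ker (gdelta 𝒜 a j)) = finrank K (𝒜 j) := fun j => by
    haveI := hfin j
    exact LinearMap.finrank_range_add_finrank_ker _
  have hr0 : ∀ j, m ≤ j → finrank K (LinearMap.range (gdelta 𝒜 a j)) = 0 := by
    intro j hj
    haveI := hfin (j + 1)
    have h1 : finrank K (LinearMap.range (gdelta 𝒜 a j)) ≤ finrank K (𝒜 (j + 1)) :=
      (LinearMap.range (gdelta 𝒜 a j)).finrank_le
    have h2 := gr_dim_zero 𝒜 ε hPD (show m < j + 1 by omega)
    omega
  have hrle : ∀ j, finrank K (LinearMap.range (gdelta 𝒜 a j))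
      ≤ finrank K (LinearMap.ker (gdelta 𝒜 a (j + 1))) := by
    intro j
    haveI := hfin (j + 1)
    exact Submodule.finrank_mono (range_gdelta_le_ker 𝒜 a hcomm hchar j)
  have hdd : ∀ i' j', i' + j' = m → finrank K (𝒜 i') = finrank K (𝒜 j') :=
    fun i' j' h => dim_eq_of_pd 𝒜 ε hfin hPD h
  have hrr : ∀ i' p, i' + p + 1 = m → finrank K (LinearMap.range (gdelta 𝒜 a i'))
      = finrank K (LinearMap.range (gdelta 𝒜 a p)) :=
    fun i' p h => rank_gdelta_eq 𝒜 ε a hcomm hfin hPD h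
  rcases Nat.eq_zero_or_pos i with rfl | hipos
  · rcases Nat.eq_zero_or_pos m with rfl | hmpos
    · rfl
    · obtain ⟨m', rfl⟩ : ∃ m', m = m' + 1 := ⟨m - 1, by omega⟩
      rw [show m' + 1 - 0 = m' + 1 from rfl]
      simp only [hdim]
      have h1 := hrn 0
      have h2 := hrn (m' + 1)
      have h3 := hdd 0 (m' + 1) (by omega)
      have h4 := hrr 0 m' (by omega)
      have h5 := hr0 (m' + 1) (by omega)
      have h6 := hrle m'
      omega
  · obtain ⟨i', rfl⟩ : ∃ i'', i = i'' + 1 := ⟨i - 1, by omega⟩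
    by_cases him : i' + 1 = m
    · rw [show m - (i' + 1) = 0 from by omega]
      simp only [hdim]
      have h1 := hrn 0
      have h2 := hrn (i' + 1)
      have h3 := hdd (i' + 1) 0 (by omega)
      have h4 := hrr i' 0 (by omega)
      have h5 := hr0 (i' + 1) (by omega)
      have h6 := hrle i'
      omega
    · obtain ⟨p, hp⟩ : ∃ p, m = i' + p + 2 := ⟨m - i' - 2, by omega⟩
      rw [show m - (i' + 1) = p + 1 from by omega]
      simp only [hdim]
      have h1 := hrn (i' + 1)
      have h2 := hrn (p + 1)
      have h3 := hdd (i' + 1) (p + 1) (by omega)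
      have h4 := hrr (i' + 1) p (by omega)
      have h5 := hrr i' (p + 1) (by omega)
      have h6 := hrle i'
      have h7 := hrle p
      omega
end

section
/- Let A be a PD_3 algebra over an algebraically closed field k of characteristic ≠ 2 with dim_k A^1 ≥ 4, and let ν be the nullity of μ_A (the maximal dimension of a 2-singular subspace of A^1). Then ν ≥ 2 and the resonance variety R^1_{ν-1}(A) contains a linear subspace of dimension ν; in particular dim R^1_{ν-1}(A) ≥ ν. -/
open Module LinearMap

/-!
Sikora's theorem: an alternating 3-form `ω` on a space `V` of dimension `n ≥ 4` over an
algebraically closed field has a singular plane. Otherwise, for every `a ≠ 0` the skew Gram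
matrix `T a` of `ω a` has kernel exactly `K ∙ a`, which forces `adj (T a) = λ(a) • a aᵀ` with
`λ(a) ≠ 0`. The diagonal entries `P k` of the adjugate of the generic matrix are forms of degree
`n - 1 ≥ 3` with `P k * X l ^ 2 = P l * X k ^ 2`, so `P k = X k ^ 2 * Q` for a single form `Q` of
positive degree; at a nontrivial zero `a` of `Q` the adjugate `λ(a) • a aᵀ` would vanish.

In a `PD₃` algebra, Poincaré duality turns a singular plane of `μ_A` into a plane of `A¹` with
vanishing products, so `ν ≥ 2`. For a `ν`-dimensional 2-singular `U` and `a ∈ U`, duality gives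
`a * U = 0`, i.e. `U ⊆ ker δ_a¹`, while `δ_a⁰` has rank at most one because `A⁰ = K`.
-/

open Matrix MvPolynomial

namespace Matrix

theorem updateCol_mulVec {ι α : Type*} [Fintype ι] [DecidableEq ι] [CommRing α]
    (M : Matrix ι ι α) (i : ι) (b w : ι → α) :
    M.updateCol i b *ᵥ w = M *ᵥ Function.update w i 0 + w i • b := by
  funext k
  simp only [mulVec, dotProduct, Pi.add_apply, Pi.smul_apply, smul_eq_mul, updateCol_apply,
    Function.update_apply]
  rw [Fintype.sum_eq_add_sum_compl i, Fintype.sum_eq_add_sum_compl i]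
  have hcompl : ∀ j ∈ ({i}ᶜ : Finset ι), j ≠ i := fun j hj => by simpa using hj
  simp +contextual only [hcompl, if_true, if_false, mul_zero, zero_add]
  ring

section Field

variable {ι K : Type*} [Fintype ι] [DecidableEq ι] [Field K]

theorem adjugate_ne_zero_of_ker_le_span {M : Matrix ι ι K} {u : ι → K} (hu : u ≠ 0)
    (hker : LinearMap.ker M.mulVecLin ≤ K ∙ u) : M.adjugate ≠ 0 := by
  -- by Cramer's rule every `M.updateCol i b` would be singular; take `u i ≠ 0` and `b ∉ range M`
  intro h
  have hcol : ∀ i b, (M.updateCol i b).det = 0 := fun i b => by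
    rw [← cramer_apply, cramer_eq_adjugate_mulVec, h, zero_mulVec, Pi.zero_apply]
  obtain ⟨i, hi⟩ : ∃ i, u i ≠ 0 := Function.ne_iff.mp hu
  have hdet : M.det = 0 := by simpa [updateCol_eq_self] using hcol i fun k => M k i
  obtain ⟨b, hb⟩ : ∃ b, ∀ v, M *ᵥ v ≠ b := by
    by_contra! hsurj
    exact (isUnit_iff_isUnit_det M).mp (mulVec_surjective_iff_isUnit.mp hsurj) |>.ne_zero hdet
  obtain ⟨w, hw0, hw⟩ := exists_mulVec_eq_zero_iff.mpr (hcol i b)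
  rw [updateCol_mulVec] at hw
  by_cases hwi : w i = 0
  · rw [hwi, zero_smul, add_zero, Function.update_eq_self_iff.mpr hwi.symm] at hw
    obtain ⟨c, rfl⟩ := Submodule.mem_span_singleton.mp (hker hw)
    have hc : c = 0 := by simpa [hi] using hwi
    simp [hc] at hw0
  · refine hb (-(w i)⁻¹ • Function.update w i 0) ?_
    rw [mulVec_smul, eq_neg_of_add_eq_zero_left hw, smul_neg, neg_smul, neg_neg, smul_smul,
      inv_mul_cancel₀ hwi, one_smul]

theorem exists_adjugate_eq_smul_vecMulVec {M : Matrix ι ι K} (hM : Mᵀ = -M) {u : ι → K}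
    (hu : u ≠ 0) (hker : LinearMap.ker M.mulVecLin = K ∙ u) :
    ∃ c : K, c ≠ 0 ∧ M.adjugate = c • vecMulVec u u := by
  have hdet : M.det = 0 :=
    exists_mulVec_eq_zero_iff.mp ⟨u, hu, hker.ge (Submodule.mem_span_singleton_self u)⟩
  have hcol : ∀ j, ∃ c : K, c • u = fun i => M.adjugate i j := fun j => by
    refine Submodule.mem_span_singleton.mp (hker.le ?_)
    funext i
    simpa [mulVec, dotProduct, mul_apply, hdet] using congrFun (congrFun (mul_adjugate M) i) j
  choose w hw using hcol
  have hA : M.adjugate = vecMulVec u w := by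
    ext i j; simpa [vecMulVec_apply, mul_comm] using (congrFun (hw j) i).symm
  -- `adjugate` commutes with transposition, so `w uᵀ = ± u wᵀ` and `w` is proportional to `u`
  have hsymm : vecMulVec w u = (-1 : K) ^ (Fintype.card ι - 1) • vecMulVec u w := by
    rw [← transpose_vecMulVec, ← hA, adjugate_transpose, hM, ← neg_one_smul K M, adjugate_smul]
  obtain ⟨i, hi⟩ : ∃ i, u i ≠ 0 := Function.ne_iff.mp hu
  set c : K := (-1) ^ (Fintype.card ι - 1) * w i / u i
  have hwc : w = c • u := by
    funext k
    have := congrFun (congrFun hsymm k) i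
    simp only [vecMulVec_apply, smul_apply, smul_eq_mul] at this
    simp only [Pi.smul_apply, smul_eq_mul, c]
    field_simp
    linear_combination this
  refine ⟨c, fun hc => adjugate_ne_zero_of_ker_le_span hu hker.le ?_, ?_⟩
  · rw [hA, hwc, hc, zero_smul, vecMulVec_zero]
  · ext k l
    simp only [hA, hwc, vecMulVec_apply, Matrix.smul_apply, Pi.smul_apply, smul_eq_mul]
    ring

end Field

section Homogeneous

variable {ι σ R : Type*} [Fintype ι] [DecidableEq ι] [CommRing R]

theorem isHomogeneous_det (M : Matrix ι ι (MvPolynomial σ R)) (d : ι → ℕ)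
    (h : ∀ i j, (M i j).IsHomogeneous (d i)) : M.det.IsHomogeneous (∑ i, d i) := by
  rw [det_apply]
  refine IsHomogeneous.sum _ _ _ fun π _ => ?_
  have hprod := IsHomogeneous.prod Finset.univ _ _ fun i (_ : i ∈ Finset.univ) => h (π i) i
  rw [Equiv.sum_comp π d] at hprod
  rcases Int.units_eq_one_or (Equiv.Perm.sign π) with hs | hs <;> simp [hs, hprod, hprod.neg]

theorem isHomogeneous_adjugate {M : Matrix ι ι (MvPolynomial σ R)}
    (h : ∀ i j, (M i j).IsHomogeneous 1) (i j : ι) :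
    (M.adjugate i j).IsHomogeneous (Fintype.card ι - 1) := by
  have hrow : ∀ r c, ((M.updateRow j (Pi.single i 1)) r c).IsHomogeneous
      (if r = j then 0 else 1) := fun r c => by
    by_cases hr : r = j
    · subst hr
      rw [updateRow_self, if_pos rfl, Pi.single_apply]
      split_ifs
      exacts [isHomogeneous_one σ R, isHomogeneous_zero _ _ _]
    · rw [updateRow_ne hr, if_neg hr]
      exact h r c
  convert adjugate_apply M i j ▸ isHomogeneous_det _ _ hrow using 1
  simp [Finset.sum_ite, Finset.filter_ne', Finset.card_erase_of_mem]

end Homogeneous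

end Matrix

namespace MvPolynomial

variable {σ R : Type*} [CommRing R]

theorem IsHomogeneous.eval_smul {F : MvPolynomial σ R} {d : ℕ} (hF : F.IsHomogeneous d)
    (c : R) (x : σ → R) : eval (c • x) F = c ^ d * eval x F := by
  rw [F.as_sum, map_sum, map_sum, Finset.mul_sum]
  refine Finset.sum_congr rfl fun m hm => ?_
  have hdeg : m.degree = d := by
    rw [Finsupp.degree_eq_weight_one]; exact hF (mem_support_iff.mp hm)
  simp only [eval_monomial, Pi.smul_apply, smul_eq_mul, mul_pow, Finsupp.prod_mul]
  rw [Finsupp.prod, Finset.prod_pow_eq_pow_sum, ← Finsupp.degree_apply, hdeg]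
  ring

theorem IsHomogeneous.divMonomial {F : MvPolynomial σ R} {d : ℕ} (hF : F.IsHomogeneous d)
    (s : σ →₀ ℕ) : (F.divMonomial s).IsHomogeneous (d - s.degree) := fun m hm => by
  have := hF (by rwa [coeff_divMonomial] at hm)
  rw [map_add] at this
  rw [Finsupp.degree_eq_weight_one]
  change Finsupp.weight 1 m = d - Finsupp.weight 1 s
  omega

theorem exists_polynomial_eval_eq_eval_add_smul (F : MvPolynomial σ R) (v w : σ → R) :
    ∃ p : Polynomial R, ∀ t, p.eval t = eval (v + t • w) F := by
  refine ⟨eval₂ Polynomial.C (fun k => Polynomial.C (v k) + Polynomial.C (w k) * Polynomial.X) F,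
    fun t => ?_⟩
  rw [← Polynomial.coe_evalRingHom, eval₂_comp_left, eval]
  congr 1
  · ext; simp
  · funext k
    simp only [Function.comp_apply, Polynomial.coe_evalRingHom, Polynomial.eval_add,
      Polynomial.eval_mul, Polynomial.eval_C, Polynomial.eval_X, Pi.add_apply, Pi.smul_apply,
      smul_eq_mul]
    ring

variable {K : Type*} [Field K] [IsAlgClosed K] [DecidableEq σ]

theorem IsHomogeneous.exists_ne_zero_eval_eq_zero {F : MvPolynomial σ K} {d : ℕ}
    (hF : F.IsHomogeneous d) (hd : d ≠ 0) {i j : σ} (hij : i ≠ j) :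
    ∃ x ≠ 0, eval x F = 0 := by
  obtain ⟨f, hf⟩ := exists_polynomial_eval_eq_eval_add_smul F (Pi.single j 1) (Pi.single i 1)
  by_cases hdeg : f.degree ≠ 0
  · obtain ⟨t, ht⟩ := IsAlgClosed.exists_root f hdeg
    refine ⟨Pi.single j 1 + t • Pi.single i 1, fun h => ?_, by rw [← hf, ht.eq_zero]⟩
    simpa [hij] using congrFun h j
  -- `F` is a constant `c` on the line `e_j + t e_i`, so by homogeneity `F (e_i + s e_j) = c s ^ d`
  -- for `s ≠ 0`, and hence also for `s = 0`
  rw [not_not] at hdeg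
  obtain ⟨g, hg⟩ := exists_polynomial_eval_eq_eval_add_smul F (Pi.single i 1) (Pi.single j 1)
  have hgs : ∀ s ≠ 0, g.eval s = (Polynomial.C (f.coeff 0) * Polynomial.X ^ d).eval s := by
    intro s hs
    have hline : Pi.single i 1 + s • Pi.single j 1 =
        s • (Pi.single j 1 + s⁻¹ • Pi.single i 1 : σ → K) := by
      rw [smul_add, smul_smul, mul_inv_cancel₀ hs, one_smul, add_comm]
    rw [hg, hline, hF.eval_smul, ← hf, Polynomial.eq_C_of_degree_eq_zero hdeg,
      Polynomial.eval_C, Polynomial.eval_mul, Polynomial.eval_C, Polynomial.eval_pow,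
      Polynomial.eval_X, mul_comm, Polynomial.coeff_C_zero]
  have hgC : g = Polynomial.C (f.coeff 0) * Polynomial.X ^ d :=
    Polynomial.eq_of_infinite_eval_eq _ _
      ((Set.finite_singleton 0).infinite_compl.mono fun s hs => hgs s hs)
  refine ⟨Pi.single i 1, fun h => by simpa using congrFun h i, ?_⟩
  simpa [hgC, hd] using (hg 0).symm

theorem exists_ne_zero_forall_eval_eq_zero_of_mul_X_sq_eq {P : σ → MvPolynomial σ K} {d : ℕ}
    (hP : ∀ k, (P k).IsHomogeneous d) (hd : 3 ≤ d) (hPX : ∀ k l, P k * X l ^ 2 = P l * X k ^ 2)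
    {i j : σ} (hij : i ≠ j) : ∃ x ≠ 0, ∀ k, eval x (P k) = 0 := by
  have hXij : ¬ (X i : MvPolynomial σ K) ∣ X j ^ 2 := fun h =>
    hij (X_dvd_X.mp (X_prime.dvd_of_dvd_pow h))
  obtain ⟨Q, hQ⟩ : X i ^ 2 ∣ P i :=
    X_prime.pow_dvd_of_dvd_mul_right 2 hXij ⟨P j, by rw [hPX, mul_comm]⟩
  have hPQ : ∀ k, P k = X k ^ 2 * Q := fun k => by
    refine mul_left_cancel₀ (pow_ne_zero 2 (X_ne_zero i)) ?_
    linear_combination (hPX k i) + X k ^ 2 * hQ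
  have hQ : Q.IsHomogeneous (d - 2) := by
    simpa [hQ, X_pow_eq_monomial, divMonomial_monomial_mul] using
      (hP i).divMonomial (Finsupp.single i 2)
  obtain ⟨x, hx, hQx⟩ := hQ.exists_ne_zero_eval_eq_zero (by omega) hij
  exact ⟨x, hx, fun k => by simp [hPQ, hQx]⟩

end MvPolynomial

namespace LinearMap

variable {σ ι : Type*} [Fintype σ] [DecidableEq σ]

theorem exists_isHomogeneous_matrix_map_eval_eq {R : Type*} [CommRing R]
    (T : (σ → R) →ₗ[R] Matrix ι ι R) :
    ∃ M : Matrix ι ι (MvPolynomial σ R),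
      (∀ i j, (M i j).IsHomogeneous 1) ∧ ∀ x, M.map (eval x) = T x := by
  let N : Matrix (ι × ι) σ R := fun p k => T (Pi.single k 1) p.1 p.2
  refine ⟨.of fun i j => N.toMvPolynomial (i, j), fun i j => N.toMvPolynomial_isHomogeneous _,
    fun x => ?_⟩
  ext i j
  rw [map_apply, of_apply, Matrix.toMvPolynomial_eval_eq_apply]
  conv_rhs => rw [pi_eq_sum_univ' x]
  simp [N, mulVec, dotProduct, Matrix.sum_apply, mul_comm]

theorem card_le_three_of_adjugate_eq_smul_vecMulVec {K : Type*} [Field K] [IsAlgClosed K]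
    (T : (σ → K) →ₗ[K] Matrix σ σ K)
    (hT : ∀ x ≠ 0, ∃ c : K, c ≠ 0 ∧ (T x).adjugate = c • vecMulVec x x) :
    Fintype.card σ ≤ 3 := by
  by_contra! hσ
  obtain ⟨i, j, hij⟩ := Fintype.exists_pair_of_one_lt_card (by omega : 1 < Fintype.card σ)
  obtain ⟨M, hM, hMT⟩ := T.exists_isHomogeneous_matrix_map_eval_eq
  have hMT' : ∀ x k, eval x (M.adjugate k k) = (T x).adjugate k k := fun x k => by
    rw [← hMT, ← RingHom.mapMatrix_apply, ← RingHom.map_adjugate]; rfl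
  have hPX : ∀ k l, M.adjugate k k * X l ^ 2 = M.adjugate l l * X k ^ 2 :=
    fun k l => MvPolynomial.funext fun x => by
      rcases eq_or_ne x 0 with rfl | hx
      · simp
      obtain ⟨c, -, hc⟩ := hT x hx
      simp only [map_mul, map_pow, eval_X, hMT', hc, Matrix.smul_apply, vecMulVec_apply,
        smul_eq_mul]
      ring
  obtain ⟨x, hx, hPx⟩ := exists_ne_zero_forall_eval_eq_zero_of_mul_X_sq_eq
    (fun k => isHomogeneous_adjugate hM k k) (by omega) hPX hij
  obtain ⟨c, hc, hcx⟩ := hT x hx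
  refine hx (funext fun k => ?_)
  simpa [hMT', hcx, vecMulVec_apply, hc] using hPx k

variable {K V : Type*} [Field K] [AddCommGroup V] [Module K V]

theorem apply_eq_zero_iff_mem_span_of_forall_linearIndependent
    {ω : V →ₗ[K] V →ₗ[K] V →ₗ[K] K} (hω : ∀ a, ω a a = 0)
    (h : ∀ a b, LinearIndependent K ![a, b] → ω a b ≠ 0) {a : V} (ha : a ≠ 0) (b : V) :
    ω a b = 0 ↔ b ∈ K ∙ a := by
  refine ⟨fun hab => ?_, fun hb => ?_⟩
  · by_contra hb
    refine h a b ((LinearIndependent.pair_iff' ha).mpr fun c hc => hb ?_) hab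
    exact Submodule.mem_span_singleton.mpr ⟨c, hc⟩
  · obtain ⟨c, rfl⟩ := Submodule.mem_span_singleton.mp hb
    rw [map_smul, hω, smul_zero]

theorem exists_linearIndependent_apply_eq_zero [IsAlgClosed K] [FiniteDimensional K V]
    (ω : V →ₗ[K] V →ₗ[K] V →ₗ[K] K) (hω₁ : ∀ a, ω a a = 0) (hω₂ : ∀ a, (ω a).IsAlt)
    (hV : 4 ≤ finrank K V) : ∃ a b : V, LinearIndependent K ![a, b] ∧ ω a b = 0 := by
  by_contra! h
  set B := Module.finBasis K V
  -- the Gram matrix of `ω a`, as a linear function of the coordinates of `a`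
  let T : (Fin (finrank K V) → K) →ₗ[K] Matrix (Fin (finrank K V)) (Fin (finrank K V)) K :=
    (toMatrix B B.dualBasis).toLinearMap ∘ₗ ω ∘ₗ B.equivFun.symm.toLinearMap
  have hTa : ∀ a, T (B.equivFun a) = toMatrix B B.dualBasis (ω a) := fun a => by
    simp only [T, comp_apply, LinearEquiv.coe_coe, LinearEquiv.symm_apply_apply]
  have hT : ∀ x ≠ 0, ∃ c : K, c ≠ 0 ∧ (T x).adjugate = c • vecMulVec x x := by
    intro x hx
    obtain ⟨a, rfl⟩ := B.equivFun.surjective x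
    have ha : a ≠ 0 := by rintro rfl; exact hx (map_zero _)
    refine exists_adjugate_eq_smul_vecMulVec ?_ hx ?_
    · ext i j
      simp only [hTa, transpose_apply, toMatrix_apply, Basis.dualBasis_repr, Matrix.neg_apply]
      exact ((hω₂ a).neg _ _).symm
    · ext v
      obtain ⟨b, rfl⟩ := B.equivFun.surjective v
      rw [mem_ker, mulVecLin_apply, hTa, Basis.equivFun_apply, toMatrix_mulVec_repr,
        Finsupp.coe_eq_zero, LinearEquiv.map_eq_zero_iff,
        apply_eq_zero_iff_mem_span_of_forall_linearIndependent hω₁ h ha]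
      simp only [Submodule.mem_span_singleton, ← map_smul, ← Basis.equivFun_apply,
        B.equivFun.injective.eq_iff]
  have := card_le_three_of_adjugate_eq_smul_vecMulVec T hT
  rw [Fintype.card_fin] at this
  omega

end LinearMap

namespace Submodule

variable {K R : Type*} [Field K] [Ring R] [Algebra K R]

/-- The 3-form `μ_A(a ∧ b ∧ c) = ε(abc)` of the paper, on `U = A¹`. -/
def tripleProductForm (ε : R →ₗ[K] K) (U : Submodule K R) : U →ₗ[K] U →ₗ[K] U →ₗ[K] K :=
  LinearMap.mk₂ K (fun a b => ε ∘ₗ LinearMap.mulLeft K ((a : R) * b) ∘ₗ U.subtype)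
    (fun _ _ _ => by ext; simp [add_mul, mul_assoc]) (fun _ _ _ => by ext; simp [mul_assoc])
    (fun _ _ _ => by ext; simp [mul_add, add_mul, mul_assoc])
    (fun _ _ _ => by ext; simp [mul_assoc])

@[simp]
theorem tripleProductForm_apply (ε : R →ₗ[K] K) (U : Submodule K R) (a b c : U) :
    U.tripleProductForm ε a b c = ε (a * b * c) :=
  rfl

open scoped Pointwise in
theorem mul_eq_zero_of_mem_span {s : Set R} (hs : ∀ x ∈ s, ∀ y ∈ s, x * y = 0) {x y : R}
    (hx : x ∈ span K s) (hy : y ∈ span K s) : x * y = 0 := by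
  have := mul_mem_mul hx hy
  rw [span_mul_span] at this
  refine (span_le.mpr ?_ : span K (s * s) ≤ ⊥) this
  rintro _ ⟨a, ha, b, hb, rfl⟩
  exact hs a ha b hb

theorem exists_finrank_eq_two_forall_mul_eq_zero [IsAlgClosed K] {V : Submodule K R}
    [FiniteDimensional K V] (ε : R →ₗ[K] K) (hchar : (2 : K) ≠ 0)
    (hanti : ∀ x ∈ V, ∀ y ∈ V, x * y = -(y * x))
    (hnd : ∀ x ∈ V, ∀ y ∈ V, (∀ c ∈ V, ε (x * y * c) = 0) → x * y = 0)
    (hV : 4 ≤ finrank K V) :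
    ∃ U : Submodule K R, U ≤ V ∧ finrank K U = 2 ∧ ∀ x ∈ U, ∀ y ∈ U, x * y = 0 := by
  have hsq : ∀ x ∈ V, x * x = 0 := fun x hx => by
    refine (smul_eq_zero.mp ?_).resolve_left hchar
    rw [two_smul]
    nth_rewrite 1 [hanti x hx x hx]
    exact neg_add_cancel _
  obtain ⟨a, b, hab, hω⟩ := (V.tripleProductForm ε).exists_linearIndependent_apply_eq_zero
    (fun a => by ext c; simp [hsq a a.2]) (fun a b => by simp [mul_assoc, hsq b b.2]) hV
  have hab0 : (a : R) * b = 0 :=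
    hnd a a.2 b b.2 fun c hc => by simpa using LinearMap.congr_fun hω ⟨c, hc⟩
  refine ⟨span K (Set.range (V.subtype ∘ ![a, b])), ?_, ?_, ?_⟩
  · exact span_le.mpr (Set.range_subset_iff.mpr fun i => (![a, b] i).2)
  · simpa using finrank_span_eq_card (hab.map' V.subtype V.ker_subtype)
  · refine fun x hx y hy => mul_eq_zero_of_mem_span ?_ hx hy
    rintro _ ⟨i, rfl⟩ _ ⟨j, rfl⟩
    fin_cases i <;> fin_cases j <;> simp [hsq, hab0, hanti b b.2 a a.2]

end Submodule

section GradedAlgebra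

variable {K R : Type*} [Field K] [Ring R] [Algebra K R] (𝒜 : ℕ → Submodule K R) [GradedRing 𝒜]

theorem mul_eq_zero_of_forall_map_mul_eq_zero (ε : R →ₗ[K] K)
    (hPD : ∀ (i : ℕ) (x : R), x ∈ 𝒜 i →
      (∀ (j : ℕ) (y : R), y ∈ 𝒜 j → i + j = 3 → ε (x * y) = 0) → x = 0) :
    ∀ x ∈ 𝒜 1, ∀ y ∈ 𝒜 1, (∀ c ∈ 𝒜 1, ε (x * y * c) = 0) → x * y = 0 :=
  fun x hx y hy h => hPD 2 _ (SetLike.mul_mem_graded hx hy) fun j c hc hj => by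
    obtain rfl : j = 1 := by omega
    exact h c hc

theorem finrank_range_gdelta_zero_le_one (hconn : ∀ x ∈ 𝒜 0, ∃ c : K, x = algebraMap K R c)
    (a : 𝒜 1) : finrank K (LinearMap.range (gdelta 𝒜 a 0)) ≤ 1 := by
  refine finrank_le_one
    ⟨gdelta 𝒜 a 0 ⟨1, SetLike.one_mem_graded 𝒜⟩, LinearMap.mem_range_self _ _⟩ ?_
  rintro ⟨_, w, rfl⟩
  obtain ⟨c, hc⟩ := hconn w w.2
  refine ⟨c, Subtype.ext (Subtype.ext ?_)⟩
  change c • ((a : R) * 1) = a * w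
  rw [hc, Algebra.algebraMap_eq_smul_one, mul_smul_comm]

theorem finrank_le_finrank_ker_gdelta_one [FiniteDimensional K (𝒜 1)] {a : 𝒜 1}
    {U : Submodule K R} (hU : U ≤ 𝒜 1) (haU : ∀ u ∈ U, (a : R) * u = 0) :
    finrank K U ≤ finrank K (LinearMap.ker (gdelta 𝒜 a 1)) := by
  rw [← (Submodule.comapSubtypeEquivOfLe hU).finrank_eq]
  exact Submodule.finrank_mono fun u hu => Subtype.ext (haU u hu)

theorem mem_resSet_one_of_mul_eq_zero [FiniteDimensional K (𝒜 1)]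
    (hconn : ∀ x ∈ 𝒜 0, ∃ c : K, x = algebraMap K R c) {a : 𝒜 1} {U : Submodule K R}
    (hU : U ≤ 𝒜 1) (haU : ∀ u ∈ U, (a : R) * u = 0) :
    a ∈ resSet 𝒜 1 (finrank K U - 1) := by
  have hker := finrank_le_finrank_ker_gdelta_one 𝒜 hU haU
  have hrange := finrank_range_gdelta_zero_le_one 𝒜 hconn a
  change _ ≤ finrank K (LinearMap.ker (gdelta 𝒜 a 1)) - finrank K (LinearMap.range (gdelta 𝒜 a 0))
  omega

end GradedAlgebra

theorem pd3_nullity_bound_on_resonance_general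
    {K R : Type*} [Field K] [IsAlgClosed K] [Ring R] [Algebra K R]
    (𝒜 : ℕ → Submodule K R) [GradedRing 𝒜]
    (hcomm : ∀ (i j : ℕ) (x y : R), x ∈ 𝒜 i → y ∈ 𝒜 j →
      x * y = (-1 : R) ^ (i * j) * (y * x))
    (hconn : ∀ x ∈ 𝒜 0, ∃ c : K, x = algebraMap K R c)
    (hchar : (2 : K) ≠ 0)
    (ε : R →ₗ[K] K)
    (hPD : ∀ (i : ℕ) (x : R), x ∈ 𝒜 i →
      (∀ (j : ℕ) (y : R), y ∈ 𝒜 j → i + j = 3 → ε (x * y) = 0) → x = 0)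
    (hb1 : 4 ≤ finrank K (𝒜 1))
    (ν : ℕ)
    (hν_exists : ∃ U : Submodule K R, U ≤ 𝒜 1 ∧ finrank K U = ν ∧
      ∀ a ∈ U, ∀ b ∈ U, ∀ c ∈ 𝒜 1, ε (a * b * c) = 0)
    (hν_max : ∀ U : Submodule K R, U ≤ 𝒜 1 →
      (∀ a ∈ U, ∀ b ∈ U, ∀ c ∈ 𝒜 1, ε (a * b * c) = 0) → finrank K U ≤ ν) :
    2 ≤ ν ∧ ∃ U : Submodule K R, U ≤ 𝒜 1 ∧ finrank K U = ν ∧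
      ∀ a : 𝒜 1, (a : R) ∈ U → a ∈ resSet 𝒜 1 (ν - 1) := by
  have : FiniteDimensional K (𝒜 1) := Module.finite_of_finrank_pos (by omega)
  have hnd := mul_eq_zero_of_forall_map_mul_eq_zero 𝒜 ε hPD
  obtain ⟨P, hP, hP2, hPP⟩ := Submodule.exists_finrank_eq_two_forall_mul_eq_zero ε hchar
    (fun x hx y hy => by simpa using hcomm 1 1 x y hx hy) hnd hb1
  refine ⟨hP2 ▸ hν_max P hP fun x hx y hy c _ => by simp [hPP x hx y hy], ?_⟩
  obtain ⟨U, hU, rfl, hUU⟩ := hν_exists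
  exact ⟨U, hU, rfl, fun a ha => mem_resSet_one_of_mul_eq_zero 𝒜 hconn hU
    fun u hu => hnd a a.2 u (hU hu) (hUU a ha u hu)⟩

/-- Let `A` be a `PD_3` algebra over an algebraically closed field of
characteristic ≠ 2 with `dim A^1 ≥ 4`, and let `ν` be the nullity of `μ_A` (the maximal
dimension of a 2-singular subspace of `A^1`).  Then `ν ≥ 2` and `R^1_{ν-1}(A)` contains a
linear subspace of dimension `ν`. -/
theorem pd3_nullity_bound_on_resonance
    {K R : Type*} [Field K] [IsAlgClosed K] [Ring R] [Algebra K R]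
    (𝒜 : ℕ → Submodule K R) [GradedRing 𝒜]
    (hcomm : ∀ (i j : ℕ) (x y : R), x ∈ 𝒜 i → y ∈ 𝒜 j →
      x * y = (-1 : R) ^ (i * j) * (y * x))
    (hconn : ∀ x ∈ 𝒜 0, ∃ c : K, x = algebraMap K R c)
    (hfin : ∀ i, FiniteDimensional K (𝒜 i))
    (hchar : (2 : K) ≠ 0)
    (ε : R →ₗ[K] K)
    (hPD : ∀ (i : ℕ) (x : R), x ∈ 𝒜 i →
      (∀ (j : ℕ) (y : R), y ∈ 𝒜 j → i + j = 3 → ε (x * y) = 0) → x = 0)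
    (hb1 : 4 ≤ finrank K (𝒜 1))
    (ν : ℕ)
    (hν_exists : ∃ U : Submodule K R, U ≤ 𝒜 1 ∧ finrank K U = ν ∧
      ∀ a ∈ U, ∀ b ∈ U, ∀ c ∈ 𝒜 1, ε (a * b * c) = 0)
    (hν_max : ∀ U : Submodule K R, U ≤ 𝒜 1 →
      (∀ a ∈ U, ∀ b ∈ U, ∀ c ∈ 𝒜 1, ε (a * b * c) = 0) → finrank K U ≤ ν) :
    2 ≤ ν ∧ ∃ U : Submodule K R, U ≤ 𝒜 1 ∧ finrank K U = ν ∧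
      ∀ a : 𝒜 1, (a : R) ∈ U → a ∈ resSet 𝒜 1 (ν - 1) :=
  pd3_nullity_bound_on_resonance_general 𝒜 hcomm hconn hchar ε hPD hb1 ν hν_exists hν_max
end

section
/- Let A be a PD_3 algebra over a field k of characteristic ≠ 2 whose 3-form μ_A has maximal rank n = dim A^1 ≥ 3 (i.e., μ_A does not factor through any proper quotient ∧^3 W with W ⊊ A^1). Then R^1_{n-2}(A) = R^1_{n-1}(A) = R^1_n(A) = {0}. -/
open Module LinearMap

/-!
For `a ≠ 0` in `A¹`, the form `(b, c) ↦ ε (a b c)` is alternating (degree-one elements square to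
zero) and nonzero (maximal rank), so its kernel, which contains `ker δ_a¹`, has codimension at
least `2`. Since `a = δ_a⁰ 1` spans a line inside `ker δ_a¹`, this gives
`dim H¹(A, δ_a) ≤ n - 3`, whereas `H¹(A, δ_0) = A¹` has dimension `n`.
-/

lemma LinearMap.IsAlt.finrank_ker_add_two_le {K V : Type*} [Field K] [AddCommGroup V]
    [Module K V] [FiniteDimensional K V] {B : V →ₗ[K] V →ₗ[K] K} (hB : B.IsAlt) (hne : B ≠ 0) :
    finrank K (ker B) + 2 ≤ finrank K V := by
  obtain ⟨b, c, hbc⟩ : ∃ b c, B b c ≠ 0 := by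
    by_contra! h
    exact hne (LinearMap.ext₂ h)
  have hcb : B c b ≠ 0 := by rwa [← hB.neg, neg_ne_zero]
  have hli : LinearIndependent K ![B b, B c] := by
    refine LinearIndependent.pair_iff.mpr fun s t hst => ?_
    have hs : s * B b c = 0 := by
      simpa [hB.self_eq_zero] using LinearMap.congr_fun hst c
    have ht : t * B c b = 0 := by
      simpa [hB.self_eq_zero] using LinearMap.congr_fun hst b
    exact ⟨(mul_eq_zero.mp hs).resolve_right hbc, (mul_eq_zero.mp ht).resolve_right hcb⟩
  have hrange : 2 ≤ finrank K (range B) := by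
    have hspan : Submodule.span K (Set.range ![B b, B c]) ≤ range B := by
      simp [Submodule.span_le, Set.insert_subset_iff, Matrix.range_cons]
    simpa [finrank_span_eq_card hli] using Submodule.finrank_mono hspan
  have := B.finrank_range_add_finrank_ker
  omega

lemma mul_self_eq_zero_of_anticomm {K R : Type*} [Field K] [Ring R] [Algebra K R]
    (hchar : (2 : K) ≠ 0) {x : R} (hx : x * x = -(x * x)) : x * x = 0 := by
  have h2 : (2 : K) • (x * x) = 0 := by
    rw [two_smul]
    exact add_eq_zero_iff_eq_neg.mpr hx
  exact (smul_eq_zero.mp h2).resolve_left hchar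

section TripleForm

variable {K R : Type*} [Field K] [Ring R] [Algebra K R]

/-- The bilinear form `μ_A(a ∧ · ∧ ·)` on `A¹`, with `μ_A(a ∧ b ∧ c) = ε (a b c)`. -/
def tripleForm (𝒜 : ℕ → Submodule K R) (ε : R →ₗ[K] K) (a : 𝒜 1) : 𝒜 1 →ₗ[K] 𝒜 1 →ₗ[K] K :=
  LinearMap.mk₂ K (fun b c => ε ((a : R) * b * c))
    (fun b b' c => by simp only [Submodule.coe_add, mul_add, add_mul, map_add])
    (fun t b c => by simp only [SetLike.val_smul, mul_smul_comm, smul_mul_assoc, map_smul])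
    (fun b c c' => by simp only [Submodule.coe_add, mul_add, map_add])
    (fun t b c => by simp only [SetLike.val_smul, mul_smul_comm, map_smul])

@[simp]
lemma tripleForm_apply {𝒜 : ℕ → Submodule K R} (ε : R →ₗ[K] K) (a b c : 𝒜 1) :
    tripleForm 𝒜 ε a b c = ε ((a : R) * b * c) := rfl

lemma tripleForm_isAlt {𝒜 : ℕ → Submodule K R} (ε : R →ₗ[K] K) (a : 𝒜 1)
    (hsq : ∀ x ∈ 𝒜 1, x * x = 0) : (tripleForm 𝒜 ε a).IsAlt := fun b => by
  simp [mul_assoc, hsq b b.2]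

lemma tripleForm_ne_zero {𝒜 : ℕ → Submodule K R} {ε : R →ₗ[K] K}
    (hmaxrank : ∀ v ∈ 𝒜 1, (∀ b ∈ 𝒜 1, ∀ c ∈ 𝒜 1, ε (v * b * c) = 0) → v = 0)
    {a : 𝒜 1} (ha : a ≠ 0) : tripleForm 𝒜 ε a ≠ 0 := by
  intro h
  refine ha (Subtype.ext (hmaxrank a a.2 fun b hb c hc => ?_))
  simpa using LinearMap.congr_fun₂ h ⟨b, hb⟩ ⟨c, hc⟩

end TripleForm

section GradedAlgebra

variable {K R : Type*} [Field K] [Ring R] [Algebra K R] (𝒜 : ℕ → Submodule K R) [GradedRing 𝒜]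

@[simp]
lemma gdelta_apply_coe (a : 𝒜 1) (i : ℕ) (u : 𝒜 i) : (gdelta 𝒜 a i u : R) = a * u := rfl

@[simp]
lemma gdelta_zero (i : ℕ) : gdelta 𝒜 0 i = 0 := by
  ext u
  simp

lemma range_gdelta_le_ker_gdelta {a : 𝒜 1} (ha : (a : R) * a = 0) (i : ℕ) :
    range (gdelta 𝒜 a i) ≤ ker (gdelta 𝒜 a (i + 1)) := by
  rintro _ ⟨u, rfl⟩
  ext
  simp [← mul_assoc, ha]

lemma self_mem_range_gdelta_zero (a : 𝒜 1) : a ∈ range (gdelta 𝒜 a 0) :=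
  ⟨⟨1, SetLike.one_mem_graded 𝒜⟩, Subtype.ext (mul_one (a : R))⟩

lemma hdim_zero_one : hdim 𝒜 0 1 = finrank K (𝒜 1) := by
  rw [hdim, gdelta_zero, gdelta_zero, ker_zero, range_zero, finrank_bot, finrank_top, Nat.sub_zero]

lemma resSet_eq_singleton_zero {i k : ℕ} (hzero : k ≤ hdim 𝒜 0 i)
    (hne : ∀ a : 𝒜 1, a ≠ 0 → hdim 𝒜 a i < k) : resSet 𝒜 i k = {0} := by
  ext a
  refine ⟨fun ha => ?_, fun ha => ha ▸ hzero⟩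
  by_contra h
  exact (hne a h).not_ge ha

variable {𝒜}

lemma ker_gdelta_le_ker_tripleForm (ε : R →ₗ[K] K) (a : 𝒜 1) :
    ker (gdelta 𝒜 a 1) ≤ ker (tripleForm 𝒜 ε a) := by
  intro x hx
  have hax : (a : R) * x = 0 := congrArg Subtype.val hx
  ext y
  simp [hax]

lemma hdim_one_add_three_le [FiniteDimensional K (𝒜 1)] {ε : R →ₗ[K] K}
    (hsq : ∀ x ∈ 𝒜 1, x * x = 0)
    (hmaxrank : ∀ v ∈ 𝒜 1, (∀ b ∈ 𝒜 1, ∀ c ∈ 𝒜 1, ε (v * b * c) = 0) → v = 0)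
    {a : 𝒜 1} (ha : a ≠ 0) : hdim 𝒜 a 1 + 3 ≤ finrank K (𝒜 1) := by
  have hker : finrank K (ker (gdelta 𝒜 a 1)) + 2 ≤ finrank K (𝒜 1) :=
    (Nat.add_le_add_right (Submodule.finrank_mono (ker_gdelta_le_ker_tripleForm ε a)) 2).trans
      ((tripleForm_isAlt ε a hsq).finrank_ker_add_two_le (tripleForm_ne_zero hmaxrank ha))
  have hrange_pos : 1 ≤ finrank K (range (gdelta 𝒜 a 0)) :=
    Submodule.one_le_finrank_iff.mpr
      ((Submodule.ne_bot_iff _).mpr ⟨a, self_mem_range_gdelta_zero 𝒜 a, ha⟩)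
  have hrange_le : finrank K (range (gdelta 𝒜 a 0)) ≤ finrank K (ker (gdelta 𝒜 a 1)) :=
    Submodule.finrank_mono (range_gdelta_le_ker_gdelta 𝒜 (hsq a a.2) 0)
  change finrank K (ker (gdelta 𝒜 a 1)) - finrank K (range (gdelta 𝒜 a 0)) + 3 ≤ _
  omega

end GradedAlgebra

theorem pd3_bottom_resonance_vanishes_general
    {K R : Type*} [Field K] [Ring R] [Algebra K R]
    (𝒜 : ℕ → Submodule K R) [GradedRing 𝒜]
    (hcomm : ∀ (i j : ℕ) (x y : R), x ∈ 𝒜 i → y ∈ 𝒜 j →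
      x * y = (-1 : R) ^ (i * j) * (y * x))
    (hfin : ∀ i, FiniteDimensional K (𝒜 i))
    (hchar : (2 : K) ≠ 0)
    (ε : R →ₗ[K] K)
    (n : ℕ) (hn : n = finrank K (𝒜 1))
    (hmaxrank : ∀ v ∈ 𝒜 1, (∀ b ∈ 𝒜 1, ∀ c ∈ 𝒜 1, ε (v * b * c) = 0) → v = 0) :
    resSet 𝒜 1 (n - 2) = {0} ∧ resSet 𝒜 1 (n - 1) = {0} ∧ resSet 𝒜 1 n = {0} := by
  have := hfin 1
  have hsq : ∀ x ∈ 𝒜 1, x * x = 0 := fun x hx =>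
    mul_self_eq_zero_of_anticomm hchar (by simpa using hcomm 1 1 x x hx hx)
  have hres : ∀ k, n - 2 ≤ k → k ≤ n → resSet 𝒜 1 k = {0} := fun k hk hkn =>
    resSet_eq_singleton_zero 𝒜 (by rwa [hdim_zero_one, ← hn]) fun a ha => by
      have := hdim_one_add_three_le hsq hmaxrank ha
      omega
  exact ⟨hres _ le_rfl (by omega), hres _ (by omega) (by omega), hres _ (by omega) le_rfl⟩

/-- If the 3-form `μ_A` of a `PD_3` algebra `A` has maximal rank
`n = dim A^1 ≥ 3` (no nonzero `v ∈ A^1` with `μ_A(v∧b∧c) = 0` for all `b, c`), then the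
bottom resonance varieties vanish: `R^1_{n-2}(A) = R^1_{n-1}(A) = R^1_n(A) = {0}`. -/
theorem pd3_bottom_resonance_vanishes
    {K R : Type*} [Field K] [Ring R] [Algebra K R]
    (𝒜 : ℕ → Submodule K R) [GradedRing 𝒜]
    (hcomm : ∀ (i j : ℕ) (x y : R), x ∈ 𝒜 i → y ∈ 𝒜 j →
      x * y = (-1 : R) ^ (i * j) * (y * x))
    (hconn : ∀ x ∈ 𝒜 0, ∃ c : K, x = algebraMap K R c)
    (hfin : ∀ i, FiniteDimensional K (𝒜 i))
    (hchar : (2 : K) ≠ 0)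
    (ε : R →ₗ[K] K)
    (hPD : ∀ (i : ℕ) (x : R), x ∈ 𝒜 i →
      (∀ (j : ℕ) (y : R), y ∈ 𝒜 j → i + j = 3 → ε (x * y) = 0) → x = 0)
    (n : ℕ) (hn : n = finrank K (𝒜 1)) (hn3 : 3 ≤ n)
    (hmaxrank : ∀ v ∈ 𝒜 1, (∀ b ∈ 𝒜 1, ∀ c ∈ 𝒜 1, ε (v * b * c) = 0) → v = 0) :
    resSet 𝒜 1 (n - 2) = {0} ∧ resSet 𝒜 1 (n - 1) = {0} ∧ resSet 𝒜 1 n = {0} :=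
  pd3_bottom_resonance_vanishes_general 𝒜 hcomm hfin hchar ε n hn hmaxrank
end

section
/- Let A be a PD_3 algebra over a field k of characteristic ≠ 2 with n = dim A^1 odd and n > 1. Then R^1_1(A) ≠ A^1 if and only if μ_A is BP-generic, i.e., there exists c ∈ A^1 such that the 2-form γ_c(a ∧ b) = μ_A(a ∧ b ∧ c) has rank n − 1. -/
open Module LinearMap

/-- For a `PD_3` algebra with `n = dim A^1` odd and `n > 1`, the resonance
variety `R^1_1(A)` is a proper subset of `A^1` if and only if `μ_A` is BP-generic, i.e.
there is `c ∈ A^1` such that the 2-form `γ_c(a∧b) = μ_A(a∧b∧c)` has rank `n - 1`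
(equivalently, its radical is spanned by `c`). -/
theorem pd3_res_proper_iff_bp_generic
    {K R : Type*} [Field K] [Ring R] [Algebra K R]
    (𝒜 : ℕ → Submodule K R) [GradedRing 𝒜]
    (hcomm : ∀ (i j : ℕ) (x y : R), x ∈ 𝒜 i → y ∈ 𝒜 j →
      x * y = (-1 : R) ^ (i * j) * (y * x))
    (hconn : ∀ x ∈ 𝒜 0, ∃ c : K, x = algebraMap K R c)
    (hfin : ∀ i, FiniteDimensional K (𝒜 i))
    (hchar : (2 : K) ≠ 0)
    (ε : R →ₗ[K] K)
    (hPD : ∀ (i : ℕ) (x : R), x ∈ 𝒜 i →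
      (∀ (j : ℕ) (y : R), y ∈ 𝒜 j → i + j = 3 → ε (x * y) = 0) → x = 0)
    (n : ℕ) (hn : n = finrank K (𝒜 1)) (hodd : Odd n) (hn1 : 1 < n) :
    resSet 𝒜 1 1 ≠ Set.univ ↔
      ∃ c ∈ 𝒜 1, ∀ x ∈ 𝒜 1, (∀ b ∈ 𝒜 1, ε (x * b * c) = 0) → ∃ t : K, x = t • c := by
  haveI := hfin 0
  haveI := hfin 1
  haveI := hfin 2
  -- squares of degree-1 elements vanish
  have hsq : ∀ x : R, x ∈ 𝒜 1 → x * x = 0 := by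
    intro x hx
    have h := hcomm 1 1 x x hx hx
    simp only [mul_one, pow_one, neg_one_mul] at h
    have h2 : (2 : K) • (x * x) = 0 := by
      rw [two_smul]
      nth_rewrite 2 [h]
      simp
    have := congrArg (fun z => (2 : K)⁻¹ • z) h2
    simpa [smul_smul, inv_mul_cancel₀ hchar] using this
  -- graded commutativity special case
  have hcomm3 : ∀ x b c : R, x ∈ 𝒜 1 → b ∈ 𝒜 1 → c ∈ 𝒜 1 →
      x * b * c = c * (x * b) := by
    intro x b c hx hb hc
    have h := hcomm 2 1 (x * b) c (SetLike.mul_mem_graded hx hb) hc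
    simpa using h
  -- kernel membership characterization
  have hker : ∀ a x : 𝒜 1, x ∈ LinearMap.ker (gdelta 𝒜 a 1) ↔ (a : R) * (x : R) = 0 := by
    intro a x
    simp [LinearMap.mem_ker, gdelta, Subtype.ext_iff]
  -- radical characterization via Poincaré duality
  have hradker : ∀ c x : 𝒜 1, (c : R) * (x : R) = 0 ↔
      ∀ b ∈ 𝒜 1, ε ((x : R) * b * (c : R)) = 0 := by
    intro c x
    constructor
    · intro h b hb
      rw [hcomm3 (x : R) b (c : R) x.2 hb c.2, ← mul_assoc, h, zero_mul, map_zero]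
    · intro h
      apply hPD 2 ((c : R) * (x : R)) (SetLike.mul_mem_graded c.2 x.2)
      intro j y hy hj
      have hj1 : j = 1 := by omega
      subst hj1
      have := hcomm3 (x : R) y (c : R) x.2 hy c.2
      rw [mul_assoc, ← this]
      exact h y hy
  -- dim A^0 ≤ 1
  have hA0 : finrank K (𝒜 0) ≤ 1 := by
    set oneA : 𝒜 0 := ⟨1, SetLike.one_mem_graded 𝒜⟩ with honeA
    have hs : Function.Surjective (LinearMap.toSpanSingleton K (𝒜 0) oneA) := by
      intro u
      obtain ⟨c, hcu⟩ := hconn (u : R) u.2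
      refine ⟨c, ?_⟩
      apply Subtype.ext
      simp [LinearMap.toSpanSingleton_apply, honeA, hcu, Algebra.algebraMap_eq_smul_one]
    calc finrank K (𝒜 0) = finrank K (⊤ : Submodule K (𝒜 0)) := (finrank_top K _).symm
      _ = finrank K (LinearMap.range (LinearMap.toSpanSingleton K (𝒜 0) oneA)) := by
          rw [LinearMap.range_eq_top.mpr hs]
      _ ≤ finrank K K := LinearMap.finrank_range_le _
      _ = 1 := finrank_self K
  rw [Set.ne_univ_iff_exists_notMem]
  constructor
  · rintro ⟨a, ha⟩
    simp only [resSet, Set.mem_setOf_eq, not_le, Nat.lt_one_iff] at ha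
    have hdimeq : hdim 𝒜 a 1 = finrank K (LinearMap.ker (gdelta 𝒜 a 1))
        - finrank K (LinearMap.range (gdelta 𝒜 a 0)) := rfl
    have hrange_le : finrank K (LinearMap.range (gdelta 𝒜 a 0)) ≤ 1 :=
      le_trans (LinearMap.finrank_range_le _) hA0
    have hker_le : finrank K (LinearMap.ker (gdelta 𝒜 a 1)) ≤ 1 := by
      rw [hdimeq] at ha
      omega
    have hane : a ≠ 0 := by
      intro h0
      have htop : LinearMap.ker (gdelta 𝒜 a 1) = ⊤ := by
        rw [Submodule.eq_top_iff']
        intro x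
        exact (hker a x).mpr (by rw [h0]; simp)
      rw [htop, finrank_top] at hker_le
      omega
    have haker : a ∈ LinearMap.ker (gdelta 𝒜 a 1) :=
      (hker a a).mpr (hsq (a : R) a.2)
    have hspan : Submodule.span K {a} = LinearMap.ker (gdelta 𝒜 a 1) := by
      apply Submodule.eq_of_le_of_finrank_le
      · rw [Submodule.span_singleton_le_iff_mem]; exact haker
      · rw [finrank_span_singleton hane]
        exact hker_le
    refine ⟨(a : R), a.2, ?_⟩
    intro x hx hxrad
    have hxker : (⟨x, hx⟩ : 𝒜 1) ∈ LinearMap.ker (gdelta 𝒜 a 1) :=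
      (hker a ⟨x, hx⟩).mpr ((hradker a ⟨x, hx⟩).mpr hxrad)
    rw [← hspan, Submodule.mem_span_singleton] at hxker
    obtain ⟨t, ht⟩ := hxker
    exact ⟨t, by simpa using congrArg Subtype.val ht.symm⟩
  · rintro ⟨c, hc, H⟩
    set a : 𝒜 1 := (⟨c, hc⟩ : 𝒜 1) with hadef
    have hc0 : c ≠ 0 := by
      intro h0
      have hpos : 0 < finrank K (𝒜 1) := by omega
      haveI : Nontrivial (𝒜 1) := Module.nontrivial_of_finrank_pos hpos
      obtain ⟨v, hv⟩ := exists_ne (0 : 𝒜 1)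
      obtain ⟨t, ht⟩ := H (v : R) v.2 (by intro b hb; simp [h0])
      apply hv
      apply Subtype.ext
      simp [ht, h0]
    have hane : a ≠ 0 := by
      intro h
      exact hc0 (congrArg Subtype.val h)
    refine ⟨a, ?_⟩
    simp only [resSet, Set.mem_setOf_eq, not_le, Nat.lt_one_iff]
    have hdimeq : hdim 𝒜 a 1 = finrank K (LinearMap.ker (gdelta 𝒜 a 1))
        - finrank K (LinearMap.range (gdelta 𝒜 a 0)) := rfl
    have hker_le : finrank K (LinearMap.ker (gdelta 𝒜 a 1)) ≤ 1 := by
      have hle : LinearMap.ker (gdelta 𝒜 a 1) ≤ Submodule.span K {a} := by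
        intro x hx
        obtain ⟨t, ht⟩ := H (x : R) x.2 ((hradker a x).mp ((hker a x).mp hx))
        rw [Submodule.mem_span_singleton]
        exact ⟨t, by apply Subtype.ext; simp [hadef, ht]⟩
      calc finrank K (LinearMap.ker (gdelta 𝒜 a 1))
          ≤ finrank K (Submodule.span K ({a} : Set (𝒜 1))) := Submodule.finrank_mono hle
        _ = 1 := finrank_span_singleton hane
    have hr_ge : 1 ≤ finrank K (LinearMap.range (gdelta 𝒜 a 0)) := by
      set oneA : 𝒜 0 := ⟨1, SetLike.one_mem_graded 𝒜⟩ with honeA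
      have hmem : gdelta 𝒜 a 0 oneA ∈ LinearMap.range (gdelta 𝒜 a 0) :=
        LinearMap.mem_range_self _ _
      have hne : gdelta 𝒜 a 0 oneA ≠ 0 := by
        intro h
        apply hc0
        have := congrArg Subtype.val h
        simpa [gdelta, honeA, hadef] using this
      have hle : Submodule.span K {gdelta 𝒜 a 0 oneA} ≤ LinearMap.range (gdelta 𝒜 a 0) := by
        rw [Submodule.span_singleton_le_iff_mem]; exact hmem
      calc (1 : ℕ) = finrank K (Submodule.span K ({gdelta 𝒜 a 0 oneA} : Set (𝒜 1))) :=
            (finrank_span_singleton hne).symm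
        _ ≤ finrank K (LinearMap.range (gdelta 𝒜 a 0)) := Submodule.finrank_mono hle
    rw [hdimeq]
    omega
end
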